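/- Let p0 ∈ (1,∞) and let X̃_{p0} be the first generation space with τ_n = Σ_{j=1}^{e_n} s_{nj} and F(n,i) = m_{n,j(n,i)}. Then M^c is not of strong type (p0,p0): for f_n = δ_{x_n}, ‖M^c f_n‖_{p0}^{p0} ≥ e_n · (n c_n/(1+n)^{p0}) · ‖f_n‖_{p0}^{p0}, which tends to infinity since e_n → ∞ and n c_n/(1+n)^{p0} → 1. -/

import Mathlib

open scoped ENNReal Classical
open Filter Set

/-- The point set of a first generation space: roots `x_n` (`Sum.inl n`) and
leaves `x_{n,i}` (`Sum.inr ⟨n, i⟩`, `i` among `τ n` leaves of branch `n`). -/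
abbrev XPt (τ : ℕ → ℕ) := ℕ ⊕ (Σ n : ℕ, Fin (τ n))

namespace FirstGen

/-- The root `x_n`. -/
def root (τ : ℕ → ℕ) (n : ℕ) : XPt τ := Sum.inl n

/-- The leaf `x_{n,i}`. -/
def leaf (τ : ℕ → ℕ) (n : ℕ) (i : Fin (τ n)) : XPt τ := Sum.inr ⟨n, i⟩

/-- The branch `S_n = {x_n, x_{n,1}, …, x_{n,τ_n}}`. -/
def branch (τ : ℕ → ℕ) (n : ℕ) : Set (XPt τ) :=
  {x | x = root τ n ∨ ∃ i, x = leaf τ n i}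

/-- The two-point set `{x_n, x_{n,i}}`. -/
def pairB (τ : ℕ → ℕ) (n : ℕ) (i : Fin (τ n)) : Set (XPt τ) :=
  {root τ n, leaf τ n i}

/-- The collection of all open balls of `X_τ`: singletons, pairs `{x_n, x_{n,i}}`,
branches `S_n` and the whole space. -/
def balls (τ : ℕ → ℕ) : Set (Set (XPt τ)) :=
  {B | (∃ x, B = {x}) ∨ (∃ n i, B = pairB τ n i) ∨ (∃ n, B = branch τ n) ∨ B = Set.univ}

/-- The ball `B(x, 3/2)` centered at `x`. -/
def cball (τ : ℕ → ℕ) : XPt τ → Set (XPt τ)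
  | Sum.inl n => branch τ n
  | Sum.inr ⟨n, i⟩ => pairB τ n i

/-- The weight (measure of the singleton): `μ({x_n}) = d n`,
`μ({x_{n,i}}) = d n * F n i`. -/
noncomputable def weight (τ : ℕ → ℕ) (d : ℕ → ℝ≥0∞)
    (F : (n : ℕ) → Fin (τ n) → ℝ≥0∞) : XPt τ → ℝ≥0∞
  | Sum.inl n => d n
  | Sum.inr ⟨n, i⟩ => d n * F n i

/-- Measure of a set. -/
noncomputable def mass {τ : ℕ → ℕ} (w : XPt τ → ℝ≥0∞) (s : Set (XPt τ)) : ℝ≥0∞ :=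
  ∑' x : s, w x.1

/-- Average `A_s(f)` of `f` over `s`. -/
noncomputable def avg {τ : ℕ → ℕ} (w f : XPt τ → ℝ≥0∞) (s : Set (XPt τ)) : ℝ≥0∞ :=
  (∑' x : s, f x.1 * w x.1) / mass w s

/-- The centered Hardy–Littlewood maximal operator of `X_τ` (the three balls
centered at `x` are `{x}`, `cball τ x` and the whole space). -/
noncomputable def Mc {τ : ℕ → ℕ} (w f : XPt τ → ℝ≥0∞) (x : XPt τ) : ℝ≥0∞ :=
  avg w f {x} ⊔ avg w f (cball τ x) ⊔ avg w f Set.univ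

/-- The non-centered Hardy–Littlewood maximal operator of `X_τ`. -/
noncomputable def Mnc {τ : ℕ → ℕ} (w f : XPt τ → ℝ≥0∞) (x : XPt τ) : ℝ≥0∞ :=
  ⨆ (B : Set (XPt τ)) (_ : B ∈ balls τ) (_ : x ∈ B), avg w f B

/-- `‖f‖_p^p = ∑_x f(x)^p μ({x})`. -/
noncomputable def lpp {τ : ℕ → ℕ} (w : XPt τ → ℝ≥0∞) (p : ℝ) (f : XPt τ → ℝ≥0∞) : ℝ≥0∞ :=
  ∑' x, f x ^ p * w x

/-- `T` is of strong type `(p,p)` (stated on the level of `p`-th powers). -/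
def strongT {τ : ℕ → ℕ} (w : XPt τ → ℝ≥0∞)
    (T : (XPt τ → ℝ≥0∞) → XPt τ → ℝ≥0∞) (p : ℝ) : Prop :=
  ∃ C : ℝ≥0∞, C ≠ ∞ ∧ ∀ f, lpp w p (T f) ≤ C * lpp w p f

/-- `T` is of weak type `(p,p)` (stated on the level of `p`-th powers). -/
def weakT {τ : ℕ → ℕ} (w : XPt τ → ℝ≥0∞)
    (T : (XPt τ → ℝ≥0∞) → XPt τ → ℝ≥0∞) (p : ℝ) : Prop :=
  ∃ C : ℝ≥0∞, C ≠ ∞ ∧ ∀ f (l : ℝ≥0∞), l ^ p * mass w {x | l < T f x} ≤ C * lpp w p f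

/-- `‖g‖_{p,∞}^p`. -/
noncomputable def wnormP {τ : ℕ → ℕ} (w : XPt τ → ℝ≥0∞) (p : ℝ) (g : XPt τ → ℝ≥0∞) : ℝ≥0∞ :=
  ⨆ l : ℝ≥0∞, l ^ p * mass w {x | l < g x}

/-- The Dirac function `δ_{x_n}`. -/
noncomputable def dirac (τ : ℕ → ℕ) (n : ℕ) : XPt τ → ℝ≥0∞ :=
  fun x => if x = root τ n then 1 else 0

end FirstGen

open FirstGen

/-!
Branch `N` carries the paper's index `n = N + 1`. For `f = δ_{x_N}` the average of `f` over the
ball `{x_N, x_{N,i}}` centred at a leaf of weight `d_N m` is `1/(1+m)`. The leaves with multiplier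
`m_{nj}` (`j ≤ e_n`, where `m_{nj} ≥ 1`) number `s_{nj}`, and `s_{nj} m_{nj} ≥ 2^{1-j} n c_n`, so
together they contribute at least `2^{1-j} n c_n (1+m_{nj})^{-p₀} d_N = n c_n (1+n)^{-p₀} d_N` to
`‖M^c f‖^{p₀}`, while `‖f‖^{p₀} = d_N`. Hence the ratio is at least `e_n · n c_n/(1+n)^{p₀}`, where
the second factor tends to `1` (as `c_n = ⌊(1+n)^{p₀}/n⌋`) and `e_n → ∞` (as `c_n → ∞` and
`(1+n)^{-p₀} → 0`).
-/

open scoped Topology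

section FloorSequence

variable {p0 : ℝ} {c : ℕ → ℕ}

theorem mul_c_mem_Ioc
    (hc : ∀ n : ℕ, c n = ⌊((n : ℝ) + 1) ^ p0 / (n : ℝ)⌋₊) {n : ℕ} (hn : 0 < n) :
    (n : ℝ) * c n ∈ Set.Ioc ((1 + (n : ℝ)) ^ p0 - n) ((1 + n) ^ p0) := by
  have hnR : (0 : ℝ) < n := by exact_mod_cast hn
  have hlt := Nat.sub_one_lt_floor (((n : ℝ) + 1) ^ p0 / n)
  have hle := Nat.floor_le (by positivity : 0 ≤ ((n : ℝ) + 1) ^ p0 / n)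
  rw [← hc, add_comm] at hlt hle
  rw [sub_lt_iff_lt_add, div_lt_iff₀ hnR] at hlt
  rw [le_div_iff₀ hnR] at hle
  constructor <;> nlinarith

theorem tendsto_mul_c_div_rpow (hp0 : 1 < p0)
    (hc : ∀ n : ℕ, c n = ⌊((n : ℝ) + 1) ^ p0 / (n : ℝ)⌋₊) :
    Tendsto (fun n : ℕ => (n : ℝ) * c n / (1 + n) ^ p0) atTop (𝓝 1) := by
  have hlow : Tendsto (fun n : ℕ => 1 - (1 + (n : ℝ)) ^ (1 - p0)) atTop (𝓝 1) := by
    have h := ((tendsto_rpow_neg_atTop (sub_pos.2 hp0)).comp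
      (tendsto_atTop_add_const_left _ 1 tendsto_natCast_atTop_atTop)).const_sub (1 : ℝ)
    rw [sub_zero] at h
    simpa only [neg_sub, Function.comp_def] using h
  refine tendsto_of_tendsto_of_tendsto_of_le_of_le' hlow tendsto_const_nhds ?_ ?_
  · filter_upwards [eventually_gt_atTop 0] with n hn
    have hx : (0 : ℝ) < 1 + n := by positivity
    have hlt := (mul_c_mem_Ioc hc hn).1
    rw [Real.rpow_sub hx, Real.rpow_one, one_sub_div (Real.rpow_pos_of_pos hx p0).ne',
      div_le_div_iff_of_pos_right (by positivity)]
    linarith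
  · filter_upwards [eventually_gt_atTop 0] with n hn
    exact div_le_one_of_le₀ (mul_c_mem_Ioc hc hn).2 (by positivity)

theorem tendsto_c_atTop (hp0 : 1 < p0)
    (hc : ∀ n : ℕ, c n = ⌊((n : ℝ) + 1) ^ p0 / (n : ℝ)⌋₊) :
    Tendsto c atTop atTop := by
  rw [← tendsto_natCast_atTop_iff (R := ℝ)]
  have hlow : Tendsto (fun n : ℕ => (1 + (n : ℝ)) ^ (p0 - 1) - 1) atTop atTop :=
    tendsto_atTop_add_const_right _ (-1) ((tendsto_rpow_atTop (by linarith)).comp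
      (tendsto_atTop_add_const_left _ 1 tendsto_natCast_atTop_atTop))
  refine tendsto_atTop_mono' _ ?_ hlow
  filter_upwards [eventually_gt_atTop 0] with n hn
  have hnR : (0 : ℝ) < n := by exact_mod_cast hn
  have hx : (0 : ℝ) < 1 + n := by positivity
  have hlt := (mul_c_mem_Ioc hc hn).1
  rw [Real.rpow_sub_one hx.ne', sub_le_iff_le_add, div_le_iff₀ hx]
  nlinarith

end FloorSequence

def eCandidates (p0 : ℝ) (c : ℕ → ℕ) (n : ℕ) : Set ℕ :=
  {k | 1 ≤ k ∧ 2 ^ (k - 1) ≤ c n ∧ ((1 : ℝ) + n) ^ (-p0) ≤ (2 : ℝ) ^ (1 - (k : ℝ) - p0)}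

section ECandidates

variable {p0 : ℝ} {c : ℕ → ℕ}

theorem bddAbove_eCandidates (n : ℕ) : BddAbove (eCandidates p0 c n) :=
  ⟨c n, fun k ⟨_, hk, _⟩ => by have := @Nat.lt_two_pow_self (k - 1); omega⟩

theorem mem_eCandidates_of_le {n j k : ℕ} (hk : k ∈ eCandidates p0 c n) (hj : 1 ≤ j)
    (hjk : j ≤ k) : j ∈ eCandidates p0 c n := by
  obtain ⟨-, hkc, hkp⟩ := hk
  refine ⟨hj, (Nat.pow_le_pow_right two_pos (by omega)).trans hkc,
    hkp.trans (Real.rpow_le_rpow_of_exponent_le one_le_two ?_)⟩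
  have : (j : ℝ) ≤ k := by exact_mod_cast hjk
  linarith

theorem mem_eCandidates_of_mem_Icc {e : ℕ → ℕ} (he : ∀ n, e n = sSup (eCandidates p0 c n))
    {n j : ℕ} (hj : j ∈ Finset.Icc 1 (e n)) : j ∈ eCandidates p0 c n := by
  obtain ⟨hj1, hje⟩ := Finset.mem_Icc.1 hj
  rw [he] at hje
  have hne : (eCandidates p0 c n).Nonempty := Set.nonempty_iff_ne_empty.2 fun h => by
    rw [h, csSup_empty, bot_eq_zero'] at hje
    omega
  exact mem_eCandidates_of_le (Nat.sSup_mem hne (bddAbove_eCandidates n)) hj1 hje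

theorem tendsto_e_atTop (hp0 : 1 < p0)
    (hc : ∀ n : ℕ, c n = ⌊((n : ℝ) + 1) ^ p0 / (n : ℝ)⌋₊)
    {e : ℕ → ℕ} (he : ∀ n, e n = sSup (eCandidates p0 c n)) :
    Tendsto (fun n => (e n : ℝ)) atTop atTop := by
  refine tendsto_natCast_atTop_iff.2 (tendsto_atTop.2 fun K => ?_)
  have hsmall : Tendsto (fun n : ℕ => ((1 : ℝ) + n) ^ (-p0)) atTop (𝓝 0) :=
    (tendsto_rpow_neg_atTop (by linarith)).comp
      (tendsto_atTop_add_const_left _ 1 tendsto_natCast_atTop_atTop)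
  filter_upwards [(tendsto_c_atTop hp0 hc).eventually_ge_atTop (2 ^ (max K 1 - 1)),
    hsmall.eventually_le_const (Real.rpow_pos_of_pos two_pos (1 - (max K 1 : ℕ) - p0))]
    with n hcn hpn
  rw [he]
  exact (le_max_left K 1).trans
    (le_csSup (bddAbove_eCandidates n) ⟨le_max_right K 1, hcn, hpn⟩)

end ECandidates

theorem one_le_of_two_rpow_mul_rpow_neg_le {p a x : ℝ} (hp : 0 < p) (hx : 0 < 1 + x)
    (h : (2 : ℝ) ^ a * (1 + x) ^ (-p) ≤ 2 ^ (a - p)) : 1 ≤ x := by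
  rw [sub_eq_add_neg, Real.rpow_add two_pos] at h
  have h2 := le_of_mul_le_mul_left h (Real.rpow_pos_of_pos two_pos a)
  rw [Real.rpow_le_rpow_iff_of_neg hx two_pos (neg_lt_zero.2 hp)] at h2
  linarith

theorem le_sInf_mul_of_pos {X m : ℝ} (hm : 0 < m) :
    X ≤ (sInf {k : ℕ | 1 ≤ k ∧ X ≤ (k : ℝ) * m} : ℕ) * m := by
  obtain ⟨k, hk⟩ := exists_nat_ge (X / m)
  rw [div_le_iff₀ hm] at hk
  have hmem : k + 1 ∈ {k : ℕ | 1 ≤ k ∧ X ≤ (k : ℝ) * m} :=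
    ⟨Nat.le_add_left 1 k, by push_cast; linarith⟩
  exact (Nat.sInf_mem ⟨_, hmem⟩).2

theorem inv_one_add_ofReal_rpow_mul_ofReal {m : ℝ} (hm : 0 ≤ m) (p : ℝ) :
    (1 + ENNReal.ofReal m)⁻¹ ^ p * ENNReal.ofReal m
      = ENNReal.ofReal ((1 + m) ^ (-p) * m) := by
  have hm1 : 0 < 1 + m := by linarith
  rw [← ENNReal.ofReal_one, ← ENNReal.ofReal_add zero_le_one hm,
    ← ENNReal.ofReal_inv_of_pos hm1, ENNReal.ofReal_rpow_of_pos (inv_pos.2 hm1),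
    Real.inv_rpow hm1.le, ← Real.rpow_neg hm1.le, ENNReal.ofReal_mul (by positivity)]

section BlockIndex

variable {s : ℕ → ℕ} {E : ℕ} {J : ℕ → ℕ}

theorem blockIndex_eq_succ
    (hJ : ∀ i, J i = sInf {k : ℕ | 1 ≤ k ∧ k ≤ E ∧ i ≤ ∑ j ∈ Finset.Icc 1 k, s j})
    {k i : ℕ} (hk : k + 1 ≤ E) (hlo : ∑ j ∈ Finset.Icc 1 k, s j < i)
    (hhi : i ≤ ∑ j ∈ Finset.Icc 1 (k + 1), s j) : J i = k + 1 := by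
  have hmem : k + 1 ∈ {k : ℕ | 1 ≤ k ∧ k ≤ E ∧ i ≤ ∑ j ∈ Finset.Icc 1 k, s j} :=
    ⟨Nat.le_add_left 1 k, hk, hhi⟩
  rw [hJ]
  refine le_antisymm (Nat.sInf_le hmem) (le_csInf ⟨_, hmem⟩ fun b ⟨_, _, hb⟩ => ?_)
  by_contra! hbk
  have : ∑ j ∈ Finset.Icc 1 b, s j ≤ ∑ j ∈ Finset.Icc 1 k, s j :=
    Finset.sum_le_sum_of_subset (Finset.Icc_subset_Icc_right (Nat.le_of_lt_succ hbk))
  omega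

theorem sum_range_blockIndex {M : Type*} [AddCommMonoid M]
    (hJ : ∀ i, J i = sInf {k : ℕ | 1 ≤ k ∧ k ≤ E ∧ i ≤ ∑ j ∈ Finset.Icc 1 k, s j})
    (g : ℕ → M) {k : ℕ} (hk : k ≤ E) :
    ∑ i ∈ Finset.range (∑ j ∈ Finset.Icc 1 k, s j), g (J (i + 1))
      = ∑ j ∈ Finset.Icc 1 k, s j • g j := by
  induction k with
  | zero => simp
  | succ k ih =>
    rw [Finset.sum_Icc_succ_top (Nat.le_add_left 1 k), Finset.sum_range_add,
      ih (by omega), Finset.sum_Icc_succ_top (Nat.le_add_left 1 k)]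
    congr 1
    have hJx : ∀ x ∈ Finset.range (s (k + 1)), J (∑ j ∈ Finset.Icc 1 k, s j + x + 1) = k + 1 :=
      fun x hx => blockIndex_eq_succ hJ hk (by omega) (by
        rw [Finset.sum_Icc_succ_top (Nat.le_add_left 1 k)]
        rw [Finset.mem_range] at hx
        omega)
    rw [Finset.sum_congr rfl fun x hx => congrArg g (hJx x hx), Finset.sum_const,
      Finset.card_range]

end BlockIndex

theorem tsum_pair {α M : Type*} [AddCommMonoid M] [TopologicalSpace M] (f : α → M) {a b : α}
    (hab : a ≠ b) :
    ∑' x : ({a, b} : Set α), f x = f a + f b := by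
  rw [← Finset.coe_pair, Finset.tsum_subtype', Finset.sum_pair hab]

namespace FirstGen

variable {τ : ℕ → ℕ}

theorem root_ne_leaf (N : ℕ) (i : Fin (τ N)) : root τ N ≠ leaf τ N i := Sum.inl_ne_inr

theorem leaf_injective (N : ℕ) : Function.Injective (leaf τ N) := fun i j h => by
  simpa [leaf] using h

theorem cball_leaf (N : ℕ) (i : Fin (τ N)) : cball τ (leaf τ N i) = pairB τ N i := rfl

theorem weight_root (d : ℕ → ℝ≥0∞) (F : (N : ℕ) → Fin (τ N) → ℝ≥0∞) (N : ℕ) :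
    weight τ d F (root τ N) = d N := rfl

theorem weight_leaf (d : ℕ → ℝ≥0∞) (F : (N : ℕ) → Fin (τ N) → ℝ≥0∞) (N : ℕ) (i : Fin (τ N)) :
    weight τ d F (leaf τ N i) = d N * F N i := rfl

theorem lpp_dirac (w : XPt τ → ℝ≥0∞) {p : ℝ} (hp : 0 < p) (N : ℕ) :
    lpp w p (dirac τ N) = w (root τ N) := by
  rw [lpp, tsum_eq_single (root τ N) fun x hx => by simp [dirac, hx, hp]]
  simp [dirac]

theorem avg_dirac_pairB (w : XPt τ → ℝ≥0∞) (N : ℕ) (i : Fin (τ N)) :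
    avg w (dirac τ N) (pairB τ N i) = w (root τ N) / (w (root τ N) + w (leaf τ N i)) := by
  rw [avg, mass, pairB, tsum_pair _ (root_ne_leaf N i),
    tsum_pair (fun x => dirac τ N x * w x) (root_ne_leaf N i)]
  simp [dirac, (root_ne_leaf N i).symm]

theorem avg_cball_le_Mc (w f : XPt τ → ℝ≥0∞) (x : XPt τ) : avg w f (cball τ x) ≤ Mc w f x :=
  le_sup_of_le_left le_sup_right

theorem sum_leaf_le_lpp (w : XPt τ → ℝ≥0∞) (p : ℝ) (g : XPt τ → ℝ≥0∞) (N : ℕ) :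
    ∑ i, g (leaf τ N i) ^ p * w (leaf τ N i) ≤ lpp w p g := by
  have := ENNReal.tsum_comp_le_tsum_of_injective (leaf_injective N) fun x => g x ^ p * w x
  rwa [tsum_fintype] at this

theorem not_strongT_of_tendsto_top {w : XPt τ → ℝ≥0∞} {T : (XPt τ → ℝ≥0∞) → XPt τ → ℝ≥0∞}
    {p : ℝ} (f : ℕ → XPt τ → ℝ≥0∞) (a : ℕ → ℝ≥0∞) (hf0 : ∀ N, lpp w p (f N) ≠ 0)
    (hftop : ∀ N, lpp w p (f N) ≠ ∞) (ha : ∀ N, a N * lpp w p (f N) ≤ lpp w p (T (f N)))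
    (hlim : Tendsto a atTop (𝓝 ∞)) : ¬ strongT w T p := by
  rintro ⟨C, hC, hT⟩
  obtain ⟨N, hN⟩ := (hlim.eventually (lt_mem_nhds hC.lt_top)).exists
  exact hN.not_ge ((ENNReal.mul_le_mul_iff_left (hf0 N) (hftop N)).1 ((ha N).trans (hT (f N))))

variable {d : ℕ → ℝ≥0∞} {F : (N : ℕ) → Fin (τ N) → ℝ≥0∞} {N : ℕ}

theorem inv_one_add_le_Mc_dirac (hd0 : d N ≠ 0) (hdtop : d N ≠ ∞) (i : Fin (τ N)) :
    (1 + F N i)⁻¹ ≤ Mc (weight τ d F) (dirac τ N) (leaf τ N i) := by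
  refine le_of_eq_of_le ?_ (avg_cball_le_Mc _ _ (leaf τ N i))
  rw [cball_leaf, avg_dirac_pairB, weight_root, weight_leaf, ← mul_one_add, ← one_div,
    ← ENNReal.mul_div_mul_left 1 _ hd0 hdtop, mul_one]

theorem mul_sum_le_lpp_Mc_dirac {p : ℝ} (hp : 0 ≤ p) (hd0 : d N ≠ 0) (hdtop : d N ≠ ∞) :
    d N * ∑ i, (1 + F N i)⁻¹ ^ p * F N i
      ≤ lpp (weight τ d F) p (Mc (weight τ d F) (dirac τ N)) := by
  refine le_trans ?_ (sum_leaf_le_lpp _ p _ N)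
  rw [Finset.mul_sum]
  refine Finset.sum_le_sum fun i _ => ?_
  rw [weight_leaf, mul_left_comm]
  gcongr
  exact inv_one_add_le_Mc_dirac hd0 hdtop i

end FirstGen

theorem tendsto_e_mul_ratio_top {p0 : ℝ} {c e : ℕ → ℕ}
    (he : Tendsto (fun n => (e n : ℝ)) atTop atTop)
    (hc : Tendsto (fun n : ℕ => (n : ℝ) * c n / (1 + n) ^ p0) atTop (𝓝 1)) :
    Tendsto (fun N : ℕ => (e (N + 1) : ℝ≥0∞)
      * ENNReal.ofReal ((((N : ℝ) + 1) * (c (N + 1) : ℝ)) / ((N : ℝ) + 2) ^ p0))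
      atTop (𝓝 ∞) := by
  have h := ENNReal.tendsto_ofReal_atTop.comp
    ((he.atTop_mul_pos one_pos hc).comp (tendsto_add_atTop_nat 1))
  refine h.congr fun N => ?_
  simp only [Function.comp_apply]
  rw [ENNReal.ofReal_mul (Nat.cast_nonneg _), ENNReal.ofReal_natCast]
  push_cast
  ring_nf

section LeafBound

variable {p0 : ℝ} {c e : ℕ → ℕ} {m : ℕ → ℕ → ℝ} {s : ℕ → ℕ → ℕ}

theorem ofReal_mul_c_div_rpow_le_s_nsmul (hp0 : 0 < p0)
    (he : ∀ n, e n = sSup (eCandidates p0 c n))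
    (hm : ∀ n j : ℕ, 0 < 1 + m n j ∧
      (2 : ℝ) ^ (1 - (j : ℝ)) * (1 + m n j) ^ (-p0) = ((1 : ℝ) + n) ^ (-p0))
    (hs : ∀ n j : ℕ, s n j = sInf {k : ℕ | 1 ≤ k ∧
      (2 : ℝ) ^ (1 - (j : ℝ)) * n * c n ≤ (k : ℝ) * m n j})
    {n j : ℕ} (hj : j ∈ Finset.Icc 1 (e n)) :
    ENNReal.ofReal ((n : ℝ) * c n / (1 + n) ^ p0)
      ≤ s n j • ((1 + ENNReal.ofReal (m n j))⁻¹ ^ p0 * ENNReal.ofReal (m n j)) := by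
  obtain ⟨hm0, hmeq⟩ := hm n j
  have hm1 : 1 ≤ m n j := one_le_of_two_rpow_mul_rpow_neg_le hp0 hm0
    (hmeq.trans_le (mem_eCandidates_of_mem_Icc he hj).2.2)
  have hsm := hs n j ▸ le_sInf_mul_of_pos (X := (2 : ℝ) ^ (1 - (j : ℝ)) * n * c n)
    (zero_lt_one.trans_le hm1)
  rw [inv_one_add_ofReal_rpow_mul_ofReal (by linarith), nsmul_eq_mul, ← ENNReal.ofReal_natCast,
    ← ENNReal.ofReal_mul (Nat.cast_nonneg _)]
  refine ENNReal.ofReal_le_ofReal ?_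
  calc (n : ℝ) * c n / (1 + n) ^ p0
      = (2 : ℝ) ^ (1 - (j : ℝ)) * n * c n * (1 + m n j) ^ (-p0) := by
        rw [div_eq_mul_inv, ← Real.rpow_neg (by positivity), ← hmeq]
        ring
    _ ≤ s n j * m n j * (1 + m n j) ^ (-p0) := by gcongr
    _ = s n j * ((1 + m n j) ^ (-p0) * m n j) := by ring

theorem e_mul_ratio_mul_lpp_dirac_le_lpp_Mc (hp0 : 0 < p0)
    (he : ∀ n, e n = sSup (eCandidates p0 c n))
    (hm : ∀ n j : ℕ, 0 < 1 + m n j ∧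
      (2 : ℝ) ^ (1 - (j : ℝ)) * (1 + m n j) ^ (-p0) = ((1 : ℝ) + n) ^ (-p0))
    (hs : ∀ n j : ℕ, s n j = sInf {k : ℕ | 1 ≤ k ∧
      (2 : ℝ) ^ (1 - (j : ℝ)) * n * c n ≤ (k : ℝ) * m n j})
    {J : ℕ → ℕ → ℕ}
    (hJ : ∀ n i : ℕ, J n i = sInf {k : ℕ | 1 ≤ k ∧ k ≤ e n ∧
      i ≤ ∑ j ∈ Finset.Icc 1 k, s n j})
    {τ : ℕ → ℕ} (hτ : ∀ N : ℕ, τ N = ∑ j ∈ Finset.Icc 1 (e (N + 1)), s (N + 1) j)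
    {d : ℕ → ℝ≥0∞} (hd : ∀ n, 0 < d n ∧ d n ≠ ∞) {F : (N : ℕ) → Fin (τ N) → ℝ≥0∞}
    (hF : ∀ N i, F N i = ENNReal.ofReal (m (N + 1) (J (N + 1) ((i : ℕ) + 1)))) (N : ℕ) :
    (e (N + 1) : ℝ≥0∞)
        * ENNReal.ofReal ((((N : ℝ) + 1) * (c (N + 1) : ℝ)) / ((N : ℝ) + 2) ^ p0)
        * lpp (weight τ d F) p0 (dirac τ N)
      ≤ lpp (weight τ d F) p0 (Mc (weight τ d F) (dirac τ N)) := by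
  set leafTerm : ℕ → ℝ≥0∞ := fun j =>
    (1 + ENNReal.ofReal (m (N + 1) j))⁻¹ ^ p0 * ENNReal.ofReal (m (N + 1) j)
  have hratio : ((N : ℝ) + 1) * c (N + 1) / ((N : ℝ) + 2) ^ p0
      = ((N + 1 : ℕ) : ℝ) * c (N + 1) / (1 + ((N + 1 : ℕ) : ℝ)) ^ p0 := by
    push_cast
    ring_nf
  rw [lpp_dirac _ hp0, weight_root, mul_comm]
  refine le_trans (mul_le_mul_right ?_ (d N))
    (mul_sum_le_lpp_Mc_dirac hp0.le (hd N).1.ne' (hd N).2)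
  simp only [hF]
  rw [Fin.sum_univ_eq_sum_range (fun i => leafTerm (J (N + 1) (i + 1))), hτ N,
    sum_range_blockIndex (hJ (N + 1)) leafTerm le_rfl, hratio]
  refine le_of_eq_of_le ?_
    (Finset.sum_le_sum fun j hj => ofReal_mul_c_div_rpow_le_s_nsmul hp0 he hm hs hj)
  simp [mul_comm]

end LeafBound

theorem Xtilde_cen_not_strong_general (p0 : ℝ) (hp0 : 1 < p0)
    (c : ℕ → ℕ) (hc : ∀ n : ℕ, c n = ⌊((n : ℝ) + 1) ^ p0 / (n : ℝ)⌋₊)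
    (e : ℕ → ℕ) (he : ∀ n : ℕ, e n = sSup {k : ℕ | 1 ≤ k ∧ 2 ^ (k - 1) ≤ c n ∧
      ((1 : ℝ) + n) ^ (-p0) ≤ (2 : ℝ) ^ (1 - (k : ℝ) - p0)})
    (m : ℕ → ℕ → ℝ)
    (hm : ∀ n j : ℕ, 0 < 1 + m n j ∧
      (2 : ℝ) ^ (1 - (j : ℝ)) * (1 + m n j) ^ (-p0) = ((1 : ℝ) + n) ^ (-p0))
    (s : ℕ → ℕ → ℕ)
    (hs : ∀ n j : ℕ, s n j = sInf {k : ℕ | 1 ≤ k ∧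
      (2 : ℝ) ^ (1 - (j : ℝ)) * n * c n ≤ (k : ℝ) * m n j})
    (J : ℕ → ℕ → ℕ)
    (hJ : ∀ n i : ℕ, J n i = sInf {k : ℕ | 1 ≤ k ∧ k ≤ e n ∧
      i ≤ ∑ j ∈ Finset.Icc 1 k, s n j})
    (τ : ℕ → ℕ) (hτ : ∀ N : ℕ, τ N = ∑ j ∈ Finset.Icc 1 (e (N + 1)), s (N + 1) j)
    (d : ℕ → ℝ≥0∞) (hd : ∀ n, 0 < d n ∧ d n ≠ ∞)
    (F : (N : ℕ) → Fin (τ N) → ℝ≥0∞)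
    (hF : ∀ N i, F N i = ENNReal.ofReal (m (N + 1) (J (N + 1) ((i : ℕ) + 1)))) :
    (Tendsto (fun n : ℕ => (e n : ℝ)) atTop atTop) ∧
    (Tendsto (fun n : ℕ => (n : ℝ) * (c n : ℝ) / (1 + (n : ℝ)) ^ p0)
      atTop (nhds 1)) ∧
    (∀ N : ℕ,
      (e (N + 1) : ℝ≥0∞)
          * ENNReal.ofReal ((((N : ℝ) + 1) * (c (N + 1) : ℝ)) / ((N : ℝ) + 2) ^ p0)
          * lpp (weight τ d F) p0 (dirac τ N)
        ≤ lpp (weight τ d F) p0 (Mc (weight τ d F) (dirac τ N))) ∧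
    ¬ strongT (weight τ d F) (Mc (weight τ d F)) p0 := by
  have hp : 0 < p0 := by linarith
  have he_top := tendsto_e_atTop hp0 hc he
  have hratio := tendsto_mul_c_div_rpow hp0 hc
  have hbound := e_mul_ratio_mul_lpp_dirac_le_lpp_Mc hp he hm hs hJ hτ hd hF
  have hlpp : ∀ N, lpp (weight τ d F) p0 (dirac τ N) = d N := fun N => lpp_dirac _ hp N
  refine ⟨he_top, hratio, hbound, not_strongT_of_tendsto_top (dirac τ) _ (fun N => ?_)
    (fun N => ?_) hbound (tendsto_e_mul_ratio_top he_top hratio)⟩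
  · exact hlpp N ▸ (hd N).1.ne'
  · exact hlpp N ▸ (hd N).2

/-- in the first generation space `X̃_{p₀}`, `p₀ ∈ (1,∞)` (branch `N`
here is the paper's branch `N+1`; it has `τ N = ∑_{j=1}^{e_{N+1}} s_{N+1,j}` leaves,
the `i`-th of weight `d N · m_{N+1, j(N+1,i+1)}`), the centered maximal operator is
not of strong type `(p₀,p₀)`: for `f_N = δ_{x_N}`,
`‖M^c f_N‖_{p₀}^{p₀} ≥ e_{N+1} · ((N+1) c_{N+1}/(N+2)^{p₀}) · ‖f_N‖_{p₀}^{p₀}`,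
which tends to infinity since `e_n → ∞` and `n c_n/(1+n)^{p₀} → 1`. -/
theorem Xtilde_cen_not_strong (p0 : ℝ) (hp0 : 1 < p0)
    (c : ℕ → ℕ) (hc : ∀ n : ℕ, c n = ⌊((n : ℝ) + 1) ^ p0 / (n : ℝ)⌋₊)
    (e : ℕ → ℕ) (he : ∀ n : ℕ, e n = sSup {k : ℕ | 1 ≤ k ∧ 2 ^ (k - 1) ≤ c n ∧
      ((1 : ℝ) + n) ^ (-p0) ≤ (2 : ℝ) ^ (1 - (k : ℝ) - p0)})
    (m : ℕ → ℕ → ℝ)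
    (hm : ∀ n j : ℕ, 0 < 1 + m n j ∧
      (2 : ℝ) ^ (1 - (j : ℝ)) * (1 + m n j) ^ (-p0) = ((1 : ℝ) + n) ^ (-p0))
    (s : ℕ → ℕ → ℕ)
    (hs : ∀ n j : ℕ, s n j = sInf {k : ℕ | 1 ≤ k ∧
      (2 : ℝ) ^ (1 - (j : ℝ)) * n * c n ≤ (k : ℝ) * m n j})
    (J : ℕ → ℕ → ℕ)
    (hJ : ∀ n i : ℕ, J n i = sInf {k : ℕ | 1 ≤ k ∧ k ≤ e n ∧
      i ≤ ∑ j ∈ Finset.Icc 1 k, s n j})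
    (τ : ℕ → ℕ) (hτ : ∀ N : ℕ, τ N = ∑ j ∈ Finset.Icc 1 (e (N + 1)), s (N + 1) j)
    (d : ℕ → ℝ≥0∞) (hd : ∀ n, 0 < d n ∧ d n ≠ ∞) (hd1 : d 0 = 1)
    (F : (N : ℕ) → Fin (τ N) → ℝ≥0∞)
    (hF : ∀ N i, F N i = ENNReal.ofReal (m (N + 1) (J (N + 1) ((i : ℕ) + 1))))
    (hhalf : ∀ n, mass (weight τ d F) (branch τ (n + 1))
      = mass (weight τ d F) (branch τ n) / 2) :
    (Tendsto (fun n : ℕ => (e n : ℝ)) atTop atTop) ∧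
    (Tendsto (fun n : ℕ => (n : ℝ) * (c n : ℝ) / (1 + (n : ℝ)) ^ p0)
      atTop (nhds 1)) ∧
    (∀ N : ℕ,
      (e (N + 1) : ℝ≥0∞)
          * ENNReal.ofReal ((((N : ℝ) + 1) * (c (N + 1) : ℝ)) / ((N : ℝ) + 2) ^ p0)
          * lpp (weight τ d F) p0 (dirac τ N)
        ≤ lpp (weight τ d F) p0 (Mc (weight τ d F) (dirac τ N))) ∧
    ¬ strongT (weight τ d F) (Mc (weight τ d F)) p0 :=
  Xtilde_cen_not_strong_general p0 hp0 c hc e he m hm s hs J hJ τ hτ d hd F hF
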